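/- Let S be a set, A an abelian group, and ∂ : F(S) → A a group homomorphism from the free group on S. Define E = ⊕_{s∈S, a∈A} ℤ·θ(s,a), and extend θ : F(S) × A → E inductively by θ(1,a)=0, θ(g₁g₂,a)=θ(g₂,a)+θ(g₁,a+∂g₂), and θ(g⁻¹,a)=−θ(g,a+∂g). Then for all g,h,k ∈ F(S) and a ∈ A: θ([g,hk],a) = θ([g,k],a) + θ([g,h],a+∂k), where [x,y]=x⁻¹y⁻¹xy. -/

import Mathlib

/-- cocycle-type identity θ([g,hk],a) = θ([g,k],a) + θ([g,h],a+∂k),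
where [x,y] = x⁻¹y⁻¹xy. -/
theorem theta_comm_mul {S A : Type*} [AddCommGroup A]
    (d : FreeGroup S → A)
    (hd : ∀ g h : FreeGroup S, d (g * h) = d g + d h)
    (θ : FreeGroup S → A → ((S × A) →₀ ℤ))
    (hbase : ∀ (s : S) (a : A), θ (FreeGroup.of s) a = Finsupp.single (s, a) 1)
    (hθ1 : ∀ a : A, θ 1 a = 0)
    (hθm : ∀ (g₁ g₂ : FreeGroup S) (a : A),
      θ (g₁ * g₂) a = θ g₂ a + θ g₁ (a + d g₂))
    (hθi : ∀ (g : FreeGroup S) (a : A), θ g⁻¹ a = -θ g (a + d g)) :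
    ∀ (g h k : FreeGroup S) (a : A),
      θ (g⁻¹ * (h * k)⁻¹ * g * (h * k)) a
        = θ (g⁻¹ * k⁻¹ * g * k) a + θ (g⁻¹ * h⁻¹ * g * h) (a + d k) := by
  intro g h k a
  have hd1 : d 1 = 0 := by
    have := hd 1 1; simpa using this.symm
  have hdinv : ∀ x : FreeGroup S, d x⁻¹ = -d x := by
    intro x
    have h0 : d x⁻¹ + d x = 0 := by
      rw [← hd]; simp [hd1]
    exact eq_neg_of_add_eq_zero_left h0
  have h2 : ∀ x : FreeGroup S, d x + d x = 0 := by
    intro x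
    induction x using FreeGroup.induction_on with
    | C1 => simp [hd1]
    | of s =>
        have h0 : (0 : (S × A) →₀ ℤ) = θ ((FreeGroup.of s)⁻¹ * FreeGroup.of s) 0 := by
          simp [hθ1]
        rw [hθm, hθi, hbase, hbase] at h0
        have h1 : Finsupp.single (s, (0:A)) (1:ℤ)
            = Finsupp.single (s, 0 + d (FreeGroup.of s) + d (FreeGroup.of s)) 1 :=
          add_neg_eq_zero.mp h0.symm
        have h3 := (Finsupp.single_left_inj (one_ne_zero)).mp h1
        have h4 := congrArg Prod.snd h3
        simpa using h4.symm
    | inv_of s ih =>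
        rw [hdinv, ← neg_add, ih, neg_zero]
    | mul x y ihx ihy =>
        rw [hd]
        calc d x + d y + (d x + d y) = (d x + d x) + (d y + d y) := by abel
        _ = 0 := by rw [ihx, ihy]; simp
  have h2n : ∀ x : FreeGroup S, (2:ℕ) • d x = 0 := by
    intro x; rw [two_nsmul]; exact h2 x
  simp only [hθm, hθi, hd, hdinv]
  abel_nf
  have h2z : ∀ x : FreeGroup S, (2:ℤ) • d x = 0 := by
    intro x; rw [two_smul]; exact h2 x
  have h3n : ∀ x : FreeGroup S, (3:ℕ) • d x = d x := by
    intro x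
    rw [show (3:ℕ) = 2 + 1 from rfl, add_smul, h2n, one_smul, zero_add]
  have h3z : ∀ x : FreeGroup S, (3:ℤ) • d x = d x := by
    intro x
    rw [show (3:ℤ) = 2 + 1 from rfl, add_smul, h2z, one_smul, zero_add]
  simp only [h2n, h2z, h3n, h3z, zero_add, add_zero]
  abel
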